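/- Let p be a prime and Λ = ℤ_p[[T]]. If f, g ∈ Λ satisfy f ≡ g (mod p^M Λ) for some M ≥ 1 and μ(f) < M, then μ(f) = μ(g) and λ(f) = λ(g). -/

import Mathlib

/-!
Reduce modulo `p`: if `f = p^μ u P` with `P` distinguished of degree `λ`, then `u P` reduces to a
unit times `T^λ` in `𝔽_p[[T]]`. Hence `μ(f)` is the `p`-adic multiplicity of `f`, and `λ(f)` is the
`T`-adic order of the reduction of `f / p^μ`. A congruence modulo `p^M` with `M > μ(f)` preserves
the multiplicity, and then the congruence `u P ≡ v Q (mod p)` preserves that order.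
-/

namespace Stmt2

/-- The one-variable Iwasawa algebra `Λ = ℤ_p[[T]]`. -/
abbrev Lam (p : ℕ) [Fact p.Prime] : Type := PowerSeries ℤ_[p]

/-- A distinguished polynomial: monic with all lower coefficients divisible by `p`. -/
def IsDistinguished (p : ℕ) [Fact p.Prime] (P : Polynomial ℤ_[p]) : Prop :=
  P.Monic ∧ ∀ i < P.natDegree, P.coeff i ∈ Ideal.span {(p : ℤ_[p])}

/-- `f = p^μ · u · P` with `u ∈ Λˣ` and `P` distinguished of degree `λ`
(Weierstrass preparation); i.e. `f` has Iwasawa invariants `μ(f) = μ` and `λ(f) = lam`. -/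
def IsWeierstrass (p : ℕ) [Fact p.Prime] (f : Lam p) (μ lam : ℕ) : Prop :=
  ∃ (u : (Lam p)ˣ) (P : Polynomial ℤ_[p]), IsDistinguished p P ∧ P.natDegree = lam ∧
    f = (p : Lam p) ^ μ * (u : Lam p) * (P : PowerSeries ℤ_[p])

open PowerSeries

section Multiplicity

theorem pow_succ_dvd_pow_mul_iff {R : Type*} [CommMonoidWithZero R] [IsCancelMulZero R]
    {π x : R} (hπ : π ≠ 0) (n : ℕ) : π ^ (n + 1) ∣ π ^ n * x ↔ π ∣ x := by
  rw [pow_succ, mul_dvd_mul_iff_left (pow_ne_zero n hπ)]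

theorem emultiplicity_pow_mul_of_not_dvd {R : Type*} [CommMonoidWithZero R] [IsCancelMulZero R]
    {π x : R} (hπ : π ≠ 0) (hx : ¬π ∣ x) (n : ℕ) : emultiplicity π (π ^ n * x) = n :=
  emultiplicity_eq_coe.2 ⟨dvd_mul_right _ _, (pow_succ_dvd_pow_mul_iff hπ n).not.2 hx⟩

theorem eq_of_pow_dvd_pow_mul_sub_pow_mul {R : Type*} [CommRing R] [IsDomain R] {π x y : R}
    (hπ : π ≠ 0) (hx : ¬π ∣ x) (hy : ¬π ∣ y) {a b M : ℕ}
    (h : π ^ M ∣ π ^ a * x - π ^ b * y) (ha : a < M) : a = b := by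
  have hlt : emultiplicity π (π ^ a * x) < emultiplicity π (π ^ a * x - π ^ b * y) := by
    rw [emultiplicity_pow_mul_of_not_dvd hπ hx]
    exact (Nat.cast_lt.2 ha).trans_le (le_emultiplicity_of_pow_dvd h)
  have key := emultiplicity_sub_of_gt hlt
  rw [sub_sub_cancel_left, emultiplicity_neg, emultiplicity_pow_mul_of_not_dvd hπ hx,
    emultiplicity_pow_mul_of_not_dvd hπ hy] at key
  exact_mod_cast key.symm

end Multiplicity

theorem C_dvd_iff {R : Type*} [Semiring R] {a : R} {F : R⟦X⟧} :
    C a ∣ F ↔ ∀ n, a ∣ coeff n F := by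
  constructor
  · rintro ⟨G, rfl⟩ n
    exact ⟨coeff n G, coeff_C_mul _ _ _⟩
  · intro h
    choose c hc using h
    exact ⟨mk c, ext fun n => by rw [coeff_C_mul, coeff_mk, hc]⟩

variable {p : ℕ} [Fact p.Prime]

theorem toZMod_eq_zero_iff (x : ℤ_[p]) : PadicInt.toZMod x = 0 ↔ (p : ℤ_[p]) ∣ x := by
  rw [← RingHom.mem_ker, PadicInt.ker_toZMod, PadicInt.maximalIdeal_eq_span_p,
    Ideal.mem_span_singleton]

theorem natCast_ne_zero : (p : Lam p) ≠ 0 := by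
  rw [← map_natCast (C (R := ℤ_[p]))]
  exact (map_ne_zero_iff _ C_injective).2 (Nat.cast_ne_zero.2 (Fact.out : p.Prime).ne_zero)

theorem natCast_dvd_iff_map_toZMod_eq_zero (F : Lam p) :
    (p : Lam p) ∣ F ↔ map PadicInt.toZMod F = 0 := by
  rw [← map_natCast (C (R := ℤ_[p])), C_dvd_iff, PowerSeries.ext_iff]
  simp only [coeff_map, map_zero, toZMod_eq_zero_iff]

theorem IsDistinguished.map_toZMod {P : Polynomial ℤ_[p]} (hP : IsDistinguished p P) :
    map PadicInt.toZMod (P : ℤ_[p]⟦X⟧) = X ^ P.natDegree := by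
  ext n
  rw [coeff_map, Polynomial.coeff_coe, coeff_X_pow]
  rcases lt_trichotomy n P.natDegree with h | rfl | h
  · rw [if_neg h.ne, toZMod_eq_zero_iff, ← Ideal.mem_span_singleton]
    exact hP.2 n h
  · rw [if_pos rfl, hP.1.coeff_natDegree, map_one]
  · rw [if_neg h.ne', Polynomial.coeff_eq_zero_of_natDegree_lt h, map_zero]

theorem IsWeierstrass.exists_eq_pow_mul {f : Lam p} {μ l : ℕ} (hf : IsWeierstrass p f μ l) :
    ∃ w : Lam p, f = (p : Lam p) ^ μ * w ∧ ¬(p : Lam p) ∣ w ∧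
      (map PadicInt.toZMod w).order = l := by
  obtain ⟨u, P, hP, rfl, rfl⟩ := hf
  have hmap : map PadicInt.toZMod ((u : Lam p) * (P : ℤ_[p]⟦X⟧)) =
      (Units.map (map PadicInt.toZMod).toMonoidHom u : (ZMod p)⟦X⟧) * X ^ P.natDegree := by
    rw [map_mul, hP.map_toZMod]
    rfl
  refine ⟨u * (P : ℤ_[p]⟦X⟧), mul_assoc _ _ _, ?_, ?_⟩
  · rw [natCast_dvd_iff_map_toZMod_eq_zero, hmap]
    exact mul_ne_zero (Units.ne_zero _) (pow_ne_zero _ X_ne_zero)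
  · rw [hmap, order_mul, order_zero_of_unit (Units.isUnit _), order_X_pow, zero_add]

theorem iwasawa_invariants_eq_of_congruent_general (p : ℕ) [Fact p.Prime]
    (f g : Lam p) (M : ℕ)
    (μf lf μg lg : ℕ) (hf : IsWeierstrass p f μf lf) (hg : IsWeierstrass p g μg lg)
    (hcong : (p : Lam p) ^ M ∣ f - g) (hμ : μf < M) :
    μf = μg ∧ lf = lg := by
  obtain ⟨x, rfl, hx, hlf⟩ := hf.exists_eq_pow_mul
  obtain ⟨y, rfl, hy, hlg⟩ := hg.exists_eq_pow_mul
  obtain rfl : μf = μg := eq_of_pow_dvd_pow_mul_sub_pow_mul natCast_ne_zero hx hy hcong hμ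
  have hxy : (p : Lam p) ∣ x - y := by
    rw [← mul_sub] at hcong
    exact (pow_succ_dvd_pow_mul_iff natCast_ne_zero μf).1 ((pow_dvd_pow _ hμ).trans hcong)
  rw [natCast_dvd_iff_map_toZMod_eq_zero, map_sub, sub_eq_zero] at hxy
  rw [hxy, hlg] at hlf
  exact ⟨rfl, by exact_mod_cast hlf.symm⟩

/-- If `f ≡ g (mod p^M Λ)` with `M ≥ 1` and `μ(f) < M`, then `μ(f) = μ(g)` and
`λ(f) = λ(g)`. -/
theorem iwasawa_invariants_eq_of_congruent (p : ℕ) [Fact p.Prime]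
    (f g : Lam p) (M : ℕ) (hM : 1 ≤ M)
    (μf lf μg lg : ℕ) (hf : IsWeierstrass p f μf lf) (hg : IsWeierstrass p g μg lg)
    (hcong : (p : Lam p) ^ M ∣ f - g) (hμ : μf < M) :
    μf = μg ∧ lf = lg :=
  iwasawa_invariants_eq_of_congruent_general p f g M μf lf μg lg hf hg hcong hμ

end Stmt2
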